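/- arXiv:2104.08346 — 3 statements merged into one kernel-verified Lean document; each statement's English description precedes it below -/
import Mathlib

section
/- (Discrete energy conservation for the leapfrog scheme) Let eⁿ ∈ V satisfy m(Δt⁻²(e^{n+1} − 2eⁿ + e^{n−1}), w) + a(eⁿ, w) = m(Fⁿ, w) for all w ∈ V, with m, a symmetric bilinear forms. Define the discrete energy Eⁿ = ½ m(D_{Δt} eⁿ, D_{Δt} eⁿ) + ½ a(e^{n−1}, eⁿ), where D_{Δt} eⁿ = Δt⁻¹(eⁿ − e^{n−1}). Then E^{n+1} − Eⁿ = ½ Δt · m(Fⁿ, D_{Δt} e^{n+1} + D_{Δt} eⁿ). -/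
/-! Testing the scheme with `w = e^{n+1} − e^{n−1} = Δt (D e^{n+1} + D eⁿ)` gives the identity.
By symmetry of `m` the kinetic part telescopes,
`m(D e^{n+1}, D e^{n+1}) − m(D eⁿ, D eⁿ) = m(D e^{n+1} − D eⁿ, D e^{n+1} + D eⁿ)`, which is the
`m`-term of the scheme tested with `w`; by symmetry of `a` the potential part telescopes,
`a(eⁿ, e^{n+1}) − a(e^{n−1}, eⁿ) = a(eⁿ, w)`. -/

section LeapfrogEnergy

variable {R V : Type*} [CommRing R] [AddCommGroup V] [Module R V]

theorem LinearMap.sub_apply_self_of_symm (B : V →ₗ[R] V →ₗ[R] R) (hB : ∀ x y, B x y = B y x)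
    (x y : V) : B x x - B y y = B (x - y) (x + y) := by
  simp only [map_sub, map_add, LinearMap.sub_apply]
  rw [hB y x]
  ring

theorem leapfrog_kinetic_sub (m : V →ₗ[R] V →ₗ[R] R) (hm : ∀ x y, m x y = m y x)
    (c : R) (u v w : V) :
    m (c • (u - v)) (c • (u - v)) - m (c • (v - w)) (c • (v - w))
      = m ((c ^ 2) • (u - (2 : R) • v + w)) (u - w) := by
  have second_difference : u - v - (v - w) = u - (2 : R) • v + w := by module
  rw [m.sub_apply_self_of_symm hm, ← smul_sub, ← smul_add, second_difference, sub_add_sub_cancel]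
  simp only [map_smul, LinearMap.smul_apply, smul_eq_mul]
  ring

theorem leapfrog_potential_sub (a : V →ₗ[R] V →ₗ[R] R) (ha : ∀ x y, a x y = a y x)
    (u v w : V) : a v u - a w v = a v (u - w) := by
  rw [map_sub, ha w v]

end LeapfrogEnergy

/-- Discrete energy identity for the leapfrog scheme: if
`m(Δt⁻²(e^{n+1} − 2eⁿ + e^{n−1}), w) + a(eⁿ, w) = m(Fⁿ, w)` for all `w`, then the
discrete energy `Eⁿ = ½ m(D eⁿ, D eⁿ) + ½ a(e^{n−1}, eⁿ)` satisfies
`E^{n+1} − Eⁿ = ½ Δt m(Fⁿ, D e^{n+1} + D eⁿ)`, where `D eⁿ = Δt⁻¹(eⁿ − e^{n−1})`. -/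
theorem stmt9
    (V : Type) [AddCommGroup V] [Module ℝ V]
    (m a : V →ₗ[ℝ] V →ₗ[ℝ] ℝ)
    (hmsymm : ∀ v w, m v w = m w v) (hasymm : ∀ v w, a v w = a w v)
    (Δt : ℝ) (hΔt : 0 < Δt)
    (e F : ℕ → V)
    (hscheme : ∀ n, 1 ≤ n → ∀ w,
      m ((Δt ^ 2)⁻¹ • (e (n + 1) - (2 : ℝ) • e n + e (n - 1))) w + a (e n) w = m (F n) w)
    (D : ℕ → V) (hD : ∀ n, D n = Δt⁻¹ • (e n - e (n - 1)))
    (En : ℕ → ℝ)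
    (hEn : ∀ n, En n = (1 / 2) * m (D n) (D n) + (1 / 2) * a (e (n - 1)) (e n)) :
    ∀ n, 1 ≤ n →
      En (n + 1) - En n = (1 / 2) * Δt * m (F n) (D (n + 1) + D n) := by
  intro n hn
  have hDsucc : D (n + 1) = Δt⁻¹ • (e (n + 1) - e n) := hD (n + 1)
  have hw : e (n + 1) - e (n - 1) = Δt • (D (n + 1) + D n) := by
    rw [hDsucc, hD, ← smul_add, smul_inv_smul₀ hΔt.ne']
    abel
  have kinetic := leapfrog_kinetic_sub m hmsymm Δt⁻¹ (e (n + 1)) (e n) (e (n - 1))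
  rw [inv_pow, ← hDsucc, ← hD] at kinetic
  have potential := leapfrog_potential_sub a hasymm (e (n + 1)) (e n) (e (n - 1))
  have tested := hscheme n hn (e (n + 1) - e (n - 1))
  rw [← kinetic, ← potential, hw, map_smul, smul_eq_mul] at tested
  rw [hEn, hEn, Nat.add_sub_cancel]
  linear_combination (1 / 2 : ℝ) * tested
end

section
/- (Positivity of the leapfrog discrete energy under a CFL condition) Let m, a be symmetric bilinear forms on a finite-dimensional space V with m positive definite and a positive semidefinite, and suppose a(v,v) ≤ K m(v,v) for all v ∈ V. If the time step satisfies 1 − ½ K Δt² ≥ δ > 0, then the discrete energy Eⁿ = ½ m(D_{Δt}eⁿ, D_{Δt}eⁿ) + ½ a(e^{n−1}, eⁿ) satisfies Eⁿ ≥ (δ/2) m(D_{Δt}eⁿ, D_{Δt}eⁿ) + ¼ a(eⁿ, eⁿ) + ¼ a(e^{n−1}, e^{n−1}) ≥ 0. -/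
/-! By polarization, `a(eⁿ⁻¹, eⁿ) = ¼ a(eⁿ, eⁿ) + ¼ a(eⁿ⁻¹, eⁿ⁻¹) − ¼ a(eⁿ − eⁿ⁻¹, eⁿ − eⁿ⁻¹)`,
and `eⁿ − eⁿ⁻¹ = Δt • D_{Δt}eⁿ`, so the bound `a ≤ K m` costs at most `¼ K Δt² m(D, D)`.
The CFL condition leaves `δ/2 · m(D, D)` of the kinetic term `½ m(D, D)`. -/

section BilinearForm

variable {R M : Type*} [CommRing R] [AddCommGroup M] [Module R M]

theorem LinearMap.apply_sub_sub_of_symm {B : M →ₗ[R] M →ₗ[R] R} (hB : ∀ v w, B v w = B w v)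
    (x y : M) : B (x - y) (x - y) = B x x - 2 * B y x + B y y := by
  simp only [map_sub, LinearMap.sub_apply, hB x y]
  ring

theorem LinearMap.apply_smul_smul_self (B : M →ₗ[R] M →ₗ[R] R) (c : R) (x : M) :
    B (c • x) (c • x) = c ^ 2 * B x x := by
  simp only [map_smul, LinearMap.smul_apply, smul_eq_mul]
  ring

end BilinearForm

theorem apply_sub_sub_le_of_le_mul {V : Type*} [AddCommGroup V] [Module ℝ V]
    {m a : V →ₗ[ℝ] V →ₗ[ℝ] ℝ} {K : ℝ} (hbound : ∀ v, a v v ≤ K * m v v)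
    {Δt : ℝ} (hΔt : Δt ≠ 0) (x y : V) :
    a (x - y) (x - y) ≤ K * Δt ^ 2 * m (Δt⁻¹ • (x - y)) (Δt⁻¹ • (x - y)) := by
  have hxy : x - y = Δt • Δt⁻¹ • (x - y) := by rw [smul_inv_smul₀ hΔt]
  calc a (x - y) (x - y) ≤ K * m (x - y) (x - y) := hbound _
    _ = K * Δt ^ 2 * m (Δt⁻¹ • (x - y)) (Δt⁻¹ • (x - y)) := by
      conv_lhs => rw [hxy, m.apply_smul_smul_self]
      ring

theorem stmt10_general
    (V : Type) [AddCommGroup V] [Module ℝ V]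
    (m a : V →ₗ[ℝ] V →ₗ[ℝ] ℝ)
    (hasymm : ∀ v w, a v w = a w v)
    (hmnn : ∀ v, 0 ≤ m v v)
    (hapsd : ∀ v, 0 ≤ a v v)
    (K Δt δ : ℝ) (hΔt : 0 < Δt) (hδ : 0 < δ)
    (hbound : ∀ v, a v v ≤ K * m v v)
    (hCFL : δ ≤ 1 - (1 / 2) * K * Δt ^ 2)
    (eprev ecur : V)
    (D : V) (hD : D = Δt⁻¹ • (ecur - eprev))
    (En : ℝ) (hEn : En = (1 / 2) * m D D + (1 / 2) * a eprev ecur) :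
    (δ / 2) * m D D + (1 / 4) * a ecur ecur + (1 / 4) * a eprev eprev ≤ En ∧
    0 ≤ En := by
  have hpol := a.apply_sub_sub_of_symm hasymm ecur eprev
  have hjump := apply_sub_sub_le_of_le_mul hbound hΔt.ne' ecur eprev
  rw [← hD] at hjump
  have hkinetic : δ * m D D ≤ (1 - (1 / 2) * K * Δt ^ 2) * m D D :=
    mul_le_mul_of_nonneg_right hCFL (hmnn D)
  have hlower : (δ / 2) * m D D + (1 / 4) * a ecur ecur + (1 / 4) * a eprev eprev ≤ En := by
    rw [hEn]
    linarith
  refine ⟨hlower, le_trans ?_ hlower⟩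
  have := hmnn D
  have := hapsd ecur
  have := hapsd eprev
  positivity

/-- Positivity of the leapfrog discrete energy under the CFL condition
`1 − ½ K Δt² ≥ δ > 0`, where `a(v,v) ≤ K m(v,v)`. -/
theorem stmt10
    (V : Type) [AddCommGroup V] [Module ℝ V] [FiniteDimensional ℝ V]
    (m a : V →ₗ[ℝ] V →ₗ[ℝ] ℝ)
    (hmsymm : ∀ v w, m v w = m w v) (hasymm : ∀ v w, a v w = a w v)
    (hmpd : ∀ v, v ≠ 0 → 0 < m v v) (hmnn : ∀ v, 0 ≤ m v v)
    (hapsd : ∀ v, 0 ≤ a v v)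
    (K Δt δ : ℝ) (hK : 0 ≤ K) (hΔt : 0 < Δt) (hδ : 0 < δ)
    (hbound : ∀ v, a v v ≤ K * m v v)
    (hCFL : δ ≤ 1 - (1 / 2) * K * Δt ^ 2)
    (eprev ecur : V)
    (D : V) (hD : D = Δt⁻¹ • (ecur - eprev))
    (En : ℝ) (hEn : En = (1 / 2) * m D D + (1 / 2) * a eprev ecur) :
    (δ / 2) * m D D + (1 / 4) * a ecur ecur + (1 / 4) * a eprev eprev ≤ En ∧
    0 ≤ En :=
  stmt10_general V m a hasymm hmnn hapsd K Δt δ hΔt hδ hbound hCFL eprev ecur D hD En hEn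
end

section
/- (Nodal average projection formula) Let Π^av_H : U^D_{H,1} → U_H be defined by b'_H(Π^av_H u, w) = b'_H(u, w) for all w ∈ U_H, where b'_H(u,w) = Σ_e ∫_e β I_e(uw) dx. Then Π^av_H is an orthogonal projection with respect to b'_H, and its value at an interior node x_i is the weighted average (Π^av_H u)(x_i) = [Σ_{e : x_i ∈ ē} (∫_e β φ_i dx) u_e(x_i)] / ∫_Ω β φ_i dx, where u_e = u|_e and φ_i is the nodal basis function at x_i. -/
/-!
Testing the defining relation of `Πav` against the nodal basis function `φ_i` (the conforming
function with nodal vector `Pi.single i 1`) leaves, because the lumped form is diagonal in the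
nodes, only the node `x_i`: `(Σ_e w e i) · (Πav u)(x_i) = Σ_e w e i · u_e(x_i)`. Dividing by
`Σ_e w e i > 0` gives the averaging formula, and the average of a conforming function is its
own nodal value, so `Πav` fixes `U_H`.
-/

open Finset

section LumpedForm

variable {Elem ι : Type*} [Fintype Elem] [Fintype ι]

def lumpedForm (w u v : Elem → ι → ℝ) : ℝ :=
  ∑ e, ∑ i, w e i * u e i * v e i

theorem lumpedForm_const_single_right [DecidableEq ι] (w u : Elem → ι → ℝ) (i : ι) :
    lumpedForm w u (fun _ => Pi.single i 1) = ∑ e, w e i * u e i := by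
  refine sum_congr rfl fun e _ => ?_
  rw [sum_eq_single i (fun j _ hj => by simp [Pi.single_eq_of_ne hj]) (by simp)]
  simp

theorem eq_weighted_average_of_lumpedForm_eq (w u : Elem → ι → ℝ) (p : ι → ℝ)
    (hp : ∀ c : ι → ℝ, lumpedForm w (fun _ => p) (fun _ => c) = lumpedForm w u (fun _ => c))
    (i : ι) (hi : ∑ e, w e i ≠ 0) :
    p i = (∑ e, w e i * u e i) / ∑ e, w e i := by
  classical
  have h := hp (Pi.single i 1)
  rw [lumpedForm_const_single_right, lumpedForm_const_single_right, ← sum_mul] at h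
  rw [eq_div_iff hi, mul_comm, h]

theorem weighted_average_const (w : Elem → ℝ) (a : ℝ) (hw : ∑ e, w e ≠ 0) :
    (∑ e, w e * a) / ∑ e, w e = a := by
  rw [← sum_mul, mul_div_cancel_left₀ a hw]

end LumpedForm

theorem stmt19_general
    (ι Elem : Type) [Fintype ι] [Fintype Elem]
    (w : Elem → ι → ℝ)
    (hω : ∀ i, 0 < ∑ e, w e i)
    (bH : (Elem → ι → ℝ) → (Elem → ι → ℝ) → ℝ)
    (hbH : ∀ u v, bH u v = ∑ e, ∑ i, w e i * u e i * v e i)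
    (emb : (ι → ℝ) → (Elem → ι → ℝ)) (hemb : ∀ c e i, emb c e i = c i)
    (Piav : (Elem → ι → ℝ) →ₗ[ℝ] (ι → ℝ))
    (hdef : ∀ u c, bH (emb (Piav u)) (emb c) = bH u (emb c)) :
    -- Πav is a projection (fixes the conforming space) …
    (∀ c, Piav (emb c) = c) ∧
    -- … and its value at each node is the β-weighted average of the element values
    (∀ u i, Piav u i = (∑ e, w e i * u e i) / (∑ e, w e i)) := by
  obtain rfl : bH = lumpedForm w := funext₂ hbH
  obtain rfl : emb = fun c _ => c := funext fun c => funext fun e => funext (hemb c e)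
  have average : ∀ u i, Piav u i = (∑ e, w e i * u e i) / ∑ e, w e i := fun u i =>
    eq_weighted_average_of_lumpedForm_eq w u (Piav u) (hdef u) i (hω i).ne'
  refine ⟨fun c => funext fun i => ?_, average⟩
  rw [average]
  exact weighted_average_const (w · i) (c i) (hω i).ne'

/-- Nodal average projection formula. Elements of the discontinuous space `U^D_{H,1}`
are recorded by their nodal values per element, `u e i = u_e(x_i)`; conforming
functions are embeddings `emb c` of nodal vectors `c : ι → ℝ`. With the lumped form
`b'_H(u,v) = Σ_e Σ_i w e i · u_e(x_i) · v_e(x_i)`, where `w e i = ∫_e β φ_i dx ≥ 0`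
and `ω i = Σ_e w e i = ∫_Ω β φ_i dx > 0`, the operator `Πav` defined by
`b'_H(Πav u, w) = b'_H(u, w)` for all conforming `w` is an orthogonal projection
(it fixes conforming functions) and is given nodewise by the weighted average
`(Πav u)(x_i) = (Σ_{e : x_i ∈ ē} (∫_e β φ_i) u_e(x_i)) / ∫_Ω β φ_i`. -/
theorem stmt19
    (ι Elem : Type) [Fintype ι] [Fintype Elem] [DecidableEq ι]
    (w : Elem → ι → ℝ) (hw : ∀ e i, 0 ≤ w e i)
    (hω : ∀ i, 0 < ∑ e, w e i)
    (bH : (Elem → ι → ℝ) → (Elem → ι → ℝ) → ℝ)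
    (hbH : ∀ u v, bH u v = ∑ e, ∑ i, w e i * u e i * v e i)
    (emb : (ι → ℝ) → (Elem → ι → ℝ)) (hemb : ∀ c e i, emb c e i = c i)
    (Piav : (Elem → ι → ℝ) →ₗ[ℝ] (ι → ℝ))
    (hdef : ∀ u c, bH (emb (Piav u)) (emb c) = bH u (emb c)) :
    -- Πav is a projection (fixes the conforming space) …
    (∀ c, Piav (emb c) = c) ∧
    -- … and its value at each node is the β-weighted average of the element values
    (∀ u i, Piav u i = (∑ e, w e i * u e i) / (∑ e, w e i)) :=
  stmt19_general ι Elem w hω bH hbH emb hemb Piav hdef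
end
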